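/- arXiv:hep-th/0408053 — 5 statements merged into one kernel-verified Lean document; each statement's English description precedes it below -/
import Mathlib

section
/- For all natural numbers s and Q' with Q' ≥ s, the sum over S from s to Q' of C(S,s)·(Q' − S·(s+2)/(s+1) + s/(s+1)) equals 0. -/
/-!
Multiplying by `s + 1`, the summand becomes `C(S,s) ((s+2)(Q'-S) - (Q'-s))`. By the hockey
stick identity `∑ C(S,s) = C(Q'+1,s+1)`, and applying it once more,
`∑ C(S,s) (Q'-S) = C(Q'+1,s+2)`; the two contributions cancel because
`(s+2) C(Q'+1,s+2) = (Q'-s) C(Q'+1,s+1)`.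
-/

open Finset

theorem Nat.cast_choose_succ_right_mul {R : Type*} [CommRing R] (n k : ℕ) :
    (n.choose (k + 1) : R) * (k + 1) = n.choose k * ((n : R) - k) := by
  rcases le_or_gt k n with hkn | hnk
  · have h := congrArg (Nat.cast : ℕ → R) (Nat.choose_succ_right_eq n k)
    push_cast [hkn] at h
    exact h
  · simp [Nat.choose_eq_zero_of_lt hnk, Nat.choose_eq_zero_of_lt (by omega : n < k + 1)]

theorem cast_sum_Icc_choose {R : Type*} [CommRing R] (s Q : ℕ) :
    ∑ S ∈ Icc s Q, (S.choose s : R) = (Q + 1).choose (s + 1) := by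
  rw [← Nat.cast_sum, Nat.sum_Icc_choose]

theorem sum_Icc_choose_mul_sub {R : Type*} [CommRing R] (s Q : ℕ) :
    ∑ S ∈ Icc s Q, (S.choose s : R) * ((Q : R) - S) = (Q + 1).choose (s + 2) := by
  induction Q with
  | zero => rcases s with _ | s <;> simp [Nat.choose_eq_zero_of_lt]
  | succ Q ih =>
    rcases le_or_gt s (Q + 1) with hs | hs
    · have hpascal :
          ((Q + 2).choose (s + 2) : R) = (Q + 1).choose (s + 1) + (Q + 1).choose (s + 2) := by
        rw [Nat.choose_succ_succ, Nat.cast_add]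
      rw [sum_Icc_succ_top hs, hpascal, ← ih, ← cast_sum_Icc_choose, ← sum_add_distrib]
      push_cast
      simp only [sub_self, mul_zero, add_zero]
      exact sum_congr rfl fun S _ => by ring
    · simp [hs, Nat.choose_eq_zero_of_lt (by omega : Q + 2 < s + 2)]

theorem stmt_0_general (s Q' : ℕ) :
    ∑ S ∈ Finset.Icc s Q',
      (Nat.choose S s : ℚ) *
        ((Q' : ℚ) - (S : ℚ) * ((s : ℚ) + 2) / ((s : ℚ) + 1) + (s : ℚ) / ((s : ℚ) + 1)) = 0 := by
  have hterm : ∀ S : ℕ, (S.choose s : ℚ) *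
      ((Q' : ℚ) - S * ((s : ℚ) + 2) / ((s : ℚ) + 1) + (s : ℚ) / ((s : ℚ) + 1)) =
      (((s : ℚ) + 2) * ((S.choose s : ℚ) * ((Q' : ℚ) - S)) - ((Q' : ℚ) - s) * S.choose s) /
        ((s : ℚ) + 1) := by
    intro S
    field_simp
    ring
  rw [sum_congr rfl fun S _ => hterm S, ← sum_div, sum_sub_distrib, ← mul_sum, ← mul_sum,
    sum_Icc_choose_mul_sub, cast_sum_Icc_choose]
  have hcancel := Nat.cast_choose_succ_right_mul (R := ℚ) (Q' + 1) (s + 1)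
  push_cast at hcancel
  rw [div_eq_zero_iff]
  exact Or.inl (by linear_combination hcancel)

/-- Lemma 1 of the paper: for all naturals `s ≤ Q'`,
`∑_{S=s}^{Q'} C(S,s) · (Q' − S·(s+2)/(s+1) + s/(s+1)) = 0`, in ℚ. -/
theorem stmt_0 (s Q' : ℕ) (h : s ≤ Q') :
    ∑ S ∈ Finset.Icc s Q',
      (Nat.choose S s : ℚ) *
        ((Q' : ℚ) - (S : ℚ) * ((s : ℚ) + 2) / ((s : ℚ) + 1) + (s : ℚ) / ((s : ℚ) + 1)) = 0 :=
  stmt_0_general s Q'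
end

section
/- Let Q' be a natural number and f : ℕ → ℚ. Suppose that for every s with 0 ≤ s ≤ Q', the sum over S from s to Q' of f(S)·C(S,s)·(Q' − S·(s+2)/(s+1) + s/(s+1)) equals 0. Then f(0) = f(1) = ··· = f(Q'), i.e. f is constant on {0, 1, ..., Q'}. -/
/-!
Write `w(s, S)` for the weight in the hypothesis. The constant function satisfies every equation:
`∑_{S=s}^{Q'} C(S,s) w(s,S) = 0`, by induction on `Q'`, since raising `Q'` by one adds `1` to every
weight and the hockey-stick identity sums the binomials. Hence `g = f - f(Q')` satisfies the
same equations, and these form a triangular system in `g(s), …, g(Q')` with diagonal entries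
`w(s, s) = Q' - s ≠ 0` for `s < Q'`; back substitution from `g(Q') = 0` gives `g = 0`.
-/

open Finset

theorem eq_zero_of_forall_sum_Icc_mul_eq_zero {K : Type*} [Field K] {Q : ℕ} {g : ℕ → K}
    {a : ℕ → ℕ → K} (hQ : g Q = 0) (hdiag : ∀ s < Q, a s s ≠ 0)
    (h : ∀ s < Q, ∑ S ∈ Icc s Q, g S * a s S = 0) : ∀ s ≤ Q, g s = 0 := by
  intro s
  induction s using Nat.strong_decreasing_induction with
  | base => exact ⟨Q, fun m hm hmQ => absurd hmQ (by omega)⟩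
  | step s ih =>
    intro hs
    rcases hs.lt_or_eq with hlt | rfl
    · have hsum := h s hlt
      rw [← add_sum_Ioc_eq_sum_Icc hs,
        sum_eq_zero fun S hS => by rw [ih S (mem_Ioc.1 hS).1 (mem_Ioc.1 hS).2, zero_mul],
        add_zero] at hsum
      exact (mul_eq_zero.1 hsum).resolve_right (hdiag s hlt)
    · exact hQ

def weight (Q s S : ℕ) : ℚ :=
  (Q : ℚ) - S * (s + 2) / (s + 1) + s / (s + 1)

theorem weight_eq (Q s S : ℕ) : weight Q s S = Q - S - (S - s) / (s + 1) := by
  unfold weight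
  field_simp
  ring

theorem weight_succ (Q s S : ℕ) : weight (Q + 1) s S = weight Q s S + 1 := by
  simp only [weight_eq]
  push_cast
  ring

theorem weight_self (Q s : ℕ) : weight Q s s = Q - s := by
  simp [weight_eq]

theorem sum_choose_mul_weight {Q s : ℕ} (hs : s ≤ Q) :
    ∑ S ∈ Icc s Q, (S.choose s : ℚ) * weight Q s S = 0 := by
  induction Q, hs using Nat.le_induction with
  | base => simp [weight_self]
  | succ n hn ih =>
    have hockey : ∑ S ∈ Icc s n, (S.choose s : ℚ) = ((n + 1).choose (s + 1) : ℚ) := by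
      exact_mod_cast Nat.sum_Icc_choose n s
    have pascal : ((n + 1).choose (s + 1) : ℚ) * (s + 1) = ((n + 1).choose s : ℚ) * (n + 1 - s) := by
      have := congrArg (Nat.cast : ℕ → ℚ) (Nat.choose_succ_right_eq (n + 1) s)
      push_cast [Nat.cast_sub (by omega : s ≤ n + 1)] at this
      exact this
    rw [sum_Icc_succ_top (by omega)]
    simp only [weight_succ, mul_add, sum_add_distrib, mul_one]
    rw [ih, hockey, weight_eq]
    field_simp
    push_cast
    linear_combination pascal

/-- Theorem 2 of the paper: if for every `s ≤ Q'` the sum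
`∑_{S=s}^{Q'} f(S)·C(S,s)·(Q' − S·(s+2)/(s+1) + s/(s+1))` vanishes,
then `f` is constant on `{0, 1, …, Q'}`. -/
theorem stmt_1 (Q' : ℕ) (f : ℕ → ℚ)
    (h : ∀ s : ℕ, s ≤ Q' →
      ∑ S ∈ Finset.Icc s Q',
        f S * (Nat.choose S s : ℚ) *
          ((Q' : ℚ) - (S : ℚ) * ((s : ℚ) + 2) / ((s : ℚ) + 1) + (s : ℚ) / ((s : ℚ) + 1)) = 0) :
    ∀ i : ℕ, i ≤ Q' → ∀ j : ℕ, j ≤ Q' → f i = f j := by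
  have hsub : ∀ s < Q', ∑ S ∈ Icc s Q', (f S - f Q') * ((S.choose s : ℚ) * weight Q' s S) = 0 := by
    intro s hs
    simp only [sub_mul, sum_sub_distrib, ← mul_sum, sum_choose_mul_weight hs.le, mul_zero,
      sub_zero]
    simpa only [mul_assoc, weight] using h s hs.le
  have hdiag : ∀ s < Q', (s.choose s : ℚ) * weight Q' s s ≠ 0 := by
    intro s hs
    rw [Nat.choose_self, weight_self, Nat.cast_one, one_mul, sub_ne_zero]
    exact_mod_cast hs.ne'
  have hconst := eq_zero_of_forall_sum_Icc_mul_eq_zero (sub_self (f Q')) hdiag hsub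
  intro i hi j hj
  rw [← sub_eq_zero, ← sub_sub_sub_cancel_right _ _ (f Q'), hconst i hi, hconst j hj, sub_zero]
end

section
/- Let Q be a natural number, let K₀ and C be real numbers with K₀ ≠ 0, and let f : ℕ → ℝ be such that f(S) ≠ 0 for some S with 0 ≤ S ≤ Q. Suppose that: (i) for every s with 0 ≤ s ≤ Q, the sum over S from s to Q of f(S)·C(S,s)·(2K₀·(Q − S·(s+2)/(s+1) + s/(s+1)) + C) equals 0; and (ii) for every r with 0 ≤ r ≤ Q, the sum over R from r to Q of f(Q−R)·C(R,r)·(2K₀·(Q − R·(r+2)/(r+1) + r/(r+1)) + C) equals 0. Then C = 0. -/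
/-!
Write `b_s = ∑_S f(S) C(S,s)` for the binomial moments of `f`.
Since `C(S,s)·(S-s) = (s+1)·C(S,s+1)`, constraint (i) at `s` is the first-order recurrence
`b_s (Q + c - s) = (s+2) b_{s+1}` with `c = C/(2K₀)`. If `M` is the top of the support of `f`
then `b_M = f(M) ≠ 0`, and the recurrence propagates non-vanishing down to `b_0 = ∑ f`.
Constraint (ii) is (i) for the reflection `R ↦ f(Q-R)`, which has the same `b_0` and first
moment `Q b_0 - b_1`. The two recurrences at `s = 0` read `b_0 (Q + c) = 2 b_1` and
`b_0 (Q + c) = 2 (Q b_0 - b_1)`; adding them gives `b_0 c = 0`.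
-/

open Finset

lemma Nat.cast_choose_succ_mul (S s : ℕ) :
    (S.choose (s + 1) : ℝ) * (s + 1) = S.choose s * ((S : ℝ) - s) := by
  rcases le_or_gt s S with hsS | hSs
  · rw [← Nat.cast_sub hsS]
    exact_mod_cast Nat.choose_succ_right_eq S s
  · simp [Nat.choose_eq_zero_of_lt hSs, Nat.choose_eq_zero_of_lt (hSs.trans s.lt_succ_self)]

def binomialMoment (Q : ℕ) (g : ℕ → ℝ) (s : ℕ) : ℝ :=
  ∑ S ∈ range (Q + 1), g S * (S.choose s : ℝ)

section

variable {Q : ℕ} {g : ℕ → ℝ}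

lemma binomialMoment_zero : binomialMoment Q g 0 = ∑ S ∈ range (Q + 1), g S := by
  simp [binomialMoment]

lemma binomialMoment_one : binomialMoment Q g 1 = ∑ S ∈ range (Q + 1), g S * S := by
  simp [binomialMoment]

lemma binomialMoment_reflect_zero :
    binomialMoment Q (fun R ↦ g (Q - R)) 0 = binomialMoment Q g 0 := by
  simpa [binomialMoment_zero] using sum_range_reflect g (Q + 1)

lemma binomialMoment_reflect_one :
    binomialMoment Q (fun R ↦ g (Q - R)) 1 = Q * binomialMoment Q g 0 - binomialMoment Q g 1 := by
  rw [binomialMoment_one, binomialMoment_zero, binomialMoment_one, mul_sum, ← sum_sub_distrib,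
    ← sum_range_reflect]
  refine sum_congr rfl fun R hR ↦ ?_
  have hRQ : R ≤ Q := Nat.lt_succ_iff.mp (mem_range.mp hR)
  rw [Nat.add_sub_cancel, Nat.sub_sub_self hRQ, Nat.cast_sub hRQ]
  ring

lemma binomialMoment_self_of_vanishing_above {M : ℕ} (hMQ : M ≤ Q)
    (hM : ∀ S, M < S → S ≤ Q → g S = 0) :
    binomialMoment Q g M = g M := by
  rw [binomialMoment, sum_eq_single_of_mem M (mem_range.mpr (Nat.lt_succ_of_le hMQ))]
  · simp
  · intro S hS hSM
    rcases hSM.lt_or_gt with hlt | hgt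
    · simp [Nat.choose_eq_zero_of_lt hlt]
    · simp [hM S hgt (Nat.lt_succ_iff.mp (mem_range.mp hS))]

lemma sum_constraint_eq (K₀ C : ℝ) (s : ℕ) :
    ∑ S ∈ Icc s Q, g S * (S.choose s : ℝ) *
        (2 * K₀ * (Q - S * (s + 2) / (s + 1) + s / (s + 1) : ℝ) + C)
      = 2 * K₀ * ((Q - s) * binomialMoment Q g s - (s + 2) * binomialMoment Q g (s + 1))
        + C * binomialMoment Q g s := by
  have hsub : Icc s Q ⊆ range (Q + 1) := fun S hS ↦
    mem_range.mpr (Nat.lt_succ_of_le (mem_Icc.mp hS).2)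
  rw [sum_subset hsub fun S hSrange hS ↦ ?_]
  · simp only [binomialMoment, mul_sum, ← sum_sub_distrib, ← sum_add_distrib]
    refine sum_congr rfl fun S _ ↦ ?_
    field_simp
    linear_combination (2 * K₀ * g S * ((s : ℝ) + 2)) * Nat.cast_choose_succ_mul S s
  · have hSs : S < s := by
      by_contra!
      exact hS (mem_Icc.mpr ⟨this, Nat.lt_succ_iff.mp (mem_range.mp hSrange)⟩)
    simp [Nat.choose_eq_zero_of_lt hSs]

lemma binomialMoment_recurrence {K₀ C : ℝ} (hK : K₀ ≠ 0)
    (h : ∀ s ≤ Q, ∑ S ∈ Icc s Q, g S * (S.choose s : ℝ) *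
        (2 * K₀ * (Q - S * (s + 2) / (s + 1) + s / (s + 1) : ℝ) + C) = 0)
    (s : ℕ) (hs : s ≤ Q) :
    binomialMoment Q g s * (Q + C / (2 * K₀) - s) = (s + 2) * binomialMoment Q g (s + 1) := by
  have hconstraint := h s hs
  rw [sum_constraint_eq] at hconstraint
  field_simp
  linear_combination hconstraint

lemma binomialMoment_zero_ne_zero {a : ℝ} (hg : ∃ S ≤ Q, g S ≠ 0)
    (hrec : ∀ s ≤ Q, binomialMoment Q g s * (a - s) = (s + 2) * binomialMoment Q g (s + 1)) :
    binomialMoment Q g 0 ≠ 0 := by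
  obtain ⟨S, hSQ, hS⟩ := hg
  set M := Nat.findGreatest (fun S ↦ g S ≠ 0) Q
  have hMQ : M ≤ Q := Nat.findGreatest_le Q
  have htop : binomialMoment Q g M ≠ 0 := by
    rw [binomialMoment_self_of_vanishing_above hMQ fun S hMS hSQ ↦
      not_not.mp (Nat.findGreatest_is_greatest hMS hSQ)]
    exact Nat.findGreatest_spec (P := fun S ↦ g S ≠ 0) hSQ hS
  refine Nat.decreasingInduction (motive := fun s _ ↦ binomialMoment Q g s ≠ 0)
    (fun s hsM hsucc hs ↦ hsucc ?_) htop M.zero_le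
  have h := hrec s (hsM.le.trans hMQ)
  rw [hs, zero_mul, eq_comm] at h
  exact (mul_eq_zero.mp h).resolve_left (by positivity)

end

/-- Theorem 1 of the paper (`C = 0`): if `K₀ ≠ 0` and a nontrivial `f` satisfies
the boundary constraints (4.5a) and (4.6) with `ξ₀ = 1`, then `C = 0`. -/
theorem stmt_2 (Q : ℕ) (K₀ C : ℝ) (hK : K₀ ≠ 0) (f : ℕ → ℝ)
    (hf : ∃ S : ℕ, S ≤ Q ∧ f S ≠ 0)
    (h1 : ∀ s : ℕ, s ≤ Q →
      ∑ S ∈ Finset.Icc s Q,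
        f S * (Nat.choose S s : ℝ) *
          (2 * K₀ * ((Q : ℝ) - (S : ℝ) * ((s : ℝ) + 2) / ((s : ℝ) + 1) + (s : ℝ) / ((s : ℝ) + 1))
            + C) = 0)
    (h2 : ∀ r : ℕ, r ≤ Q →
      ∑ R ∈ Finset.Icc r Q,
        f (Q - R) * (Nat.choose R r : ℝ) *
          (2 * K₀ * ((Q : ℝ) - (R : ℝ) * ((r : ℝ) + 2) / ((r : ℝ) + 1) + (r : ℝ) / ((r : ℝ) + 1))
            + C) = 0) :
    C = 0 := by
  have hrec_f := binomialMoment_recurrence hK h1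
  have hb0 := binomialMoment_zero_ne_zero hf hrec_f
  have eq_f := hrec_f 0 Q.zero_le
  have eq_reflect := binomialMoment_recurrence hK h2 0 Q.zero_le
  rw [binomialMoment_reflect_zero, binomialMoment_reflect_one] at eq_reflect
  have hc : binomialMoment Q f 0 * (C / (2 * K₀)) = 0 := by
    push_cast at eq_f eq_reflect
    linear_combination (eq_f + eq_reflect) / 2
  simpa [hb0, hK] using hc
end

section
/- For every natural number Q and all real numbers x and y, the double sum over r from 0 to Q and s from 0 to Q−r of C(Q+1, r+s+1)·x^r·y^s/(r!·s!) equals (Q+1) times the sum over k from 0 to Q of C(Q,k)·(x+y)^k/(k+1)!. -/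
open Finset
open scoped Nat

/-! Since `(Q+1)·C(Q,k) = (k+1)·C(Q+1,k+1)`, the coefficient `C(Q+1, r+s+1)/(r!·s!)` equals
`(Q+1)·C(Q,k)/(k+1)! · C(k,r)` with `k = r+s`. Summing the double sum along the diagonals
`r + s = k` therefore turns each diagonal into a binomial expansion of `(x+y)^k`. -/

theorem cast_choose_add_add_one_div_factorial_mul_factorial {K : Type*} [Field K] [CharZero K]
    (n r s : ℕ) :
    ((n + 1).choose (r + s + 1) : K) / (r ! * s !)
      = (n + 1) * ((n.choose (r + s) : K) / (r + s + 1)!) * (r + s).choose r := by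
  have hpascal : ((n : K) + 1) * n.choose (r + s) = (n + 1).choose (r + s + 1) * (r + s + 1) := by
    exact_mod_cast Nat.add_one_mul_choose_eq n (r + s)
  have hr : (r ! : K) ≠ 0 := mod_cast r.factorial_ne_zero
  have hs : (s ! : K) ≠ 0 := mod_cast s.factorial_ne_zero
  have hrs : ((r + s)! : K) ≠ 0 := mod_cast (r + s).factorial_ne_zero
  have hrs1 : (r + s + 1 : K) ≠ 0 := mod_cast (r + s).succ_ne_zero
  rw [Nat.cast_add_choose, Nat.factorial_succ]
  push_cast
  field_simp
  exact hpascal.symm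

theorem sum_range_choose_add_add_one_mul_pow_div {K : Type*} [Field K] [CharZero K]
    (n k : ℕ) (x y : K) :
    ∑ r ∈ range (k + 1), ((n + 1).choose (r + (k - r) + 1) : K) * x ^ r * y ^ (k - r)
        / (r ! * (k - r)!)
      = (n + 1) * (n.choose k * (x + y) ^ k / (k + 1)!) := by
  rw [add_pow, mul_sum, sum_div, mul_sum]
  refine sum_congr rfl fun r hr => ?_
  calc _ = ((n + 1).choose (r + (k - r) + 1) : K) / (r ! * (k - r)!) * (x ^ r * y ^ (k - r)) := by
        ring
    _ = _ := by
      rw [cast_choose_add_add_one_div_factorial_mul_factorial,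
        Nat.add_sub_cancel' (mem_range_succ_iff.mp hr)]
      ring

/-- Equation (5.4a), step two:
`∑_{r=0}^{Q} ∑_{s=0}^{Q−r} C(Q+1, r+s+1)·xʳ·yˢ/(r!·s!)
  = (Q+1)·∑_{k=0}^{Q} C(Q,k)·(x+y)ᵏ/(k+1)!`. -/
theorem stmt_8 (Q : ℕ) (x y : ℝ) :
    ∑ r ∈ Finset.range (Q + 1), ∑ s ∈ Finset.range (Q - r + 1),
        (Nat.choose (Q + 1) (r + s + 1) : ℝ) * x ^ r * y ^ s
          / ((Nat.factorial r : ℝ) * (Nat.factorial s : ℝ))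
      = ((Q : ℝ) + 1) *
          ∑ k ∈ Finset.range (Q + 1),
            (Nat.choose Q k : ℝ) * (x + y) ^ k / (Nat.factorial (k + 1) : ℝ) := by
  have htriangle : ∀ r ∈ range (Q + 1), range (Q - r + 1) = range (Q + 1 - r) := fun r hr => by
    rw [Nat.sub_add_comm (mem_range_succ_iff.mp hr)]
  rw [sum_congr rfl fun r hr => by rw [htriangle r hr], ← sum_range_diag_flip, mul_sum]
  exact sum_congr rfl fun k _ => sum_range_choose_add_add_one_mul_pow_div Q k x y
end

section
/- Let u, h̃, and ε be real numbers with u ≠ 0, and let c : ℕ → ℕ → ℝ satisfy, for all natural numbers r and s, u·c(r,s)·((r:ℝ)+s+h̃+1−ε) = (1/2)·(r+1)²·c(r+1,s) + (1/2)·(s+1)²·c(r,s+1). Suppose R₀ and S₀ are natural numbers with c(R₀,S₀) ≠ 0, c(R₀+1,S₀) = 0, and c(R₀,S₀+1) = 0. Then ε = 1 + R₀ + S₀ + h̃. Consequently, if R' and S' are any other natural numbers with c(R',S') ≠ 0, c(R'+1,S') = 0, and c(R',S'+1) = 0, then R' + S' = R₀ + S₀. -/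
/-- The energy quantization condition (3.10): if `c` satisfies recurrence (3.9)
with rescaled eigenenergy `ε` and truncates at `(R₀, S₀)` where it is nonzero,
then `ε = 1 + R₀ + S₀ + htilde`; consequently any other truncation corner `(R', S')`
satisfies `R' + S' = R₀ + S₀`. -/
theorem stmt_12 (u htilde ε : ℝ) (hu : u ≠ 0) (c : ℕ → ℕ → ℝ)
    (hc : ∀ r s : ℕ,
      u * c r s * ((r : ℝ) + (s : ℝ) + htilde + 1 - ε)
        = (1 / 2) * ((r : ℝ) + 1) ^ 2 * c (r + 1) s
          + (1 / 2) * ((s : ℝ) + 1) ^ 2 * c r (s + 1))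
    (R₀ S₀ : ℕ) (h0 : c R₀ S₀ ≠ 0) (h1 : c (R₀ + 1) S₀ = 0) (h2 : c R₀ (S₀ + 1) = 0) :
    ε = 1 + (R₀ : ℝ) + (S₀ : ℝ) + htilde ∧
      ∀ R' S' : ℕ, c R' S' ≠ 0 → c (R' + 1) S' = 0 → c R' (S' + 1) = 0 →
        R' + S' = R₀ + S₀ := by
  have key : ∀ R S : ℕ, c R S ≠ 0 → c (R + 1) S = 0 → c R (S + 1) = 0 →
      ε = 1 + (R : ℝ) + (S : ℝ) + htilde := by
    intro R S hne ha hb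
    have h := hc R S
    rw [ha, hb] at h
    have : (R : ℝ) + S + htilde + 1 - ε = 0 := by
      rcases mul_eq_zero.mp (by linarith : u * c R S * ((R : ℝ) + S + htilde + 1 - ε) = 0) with h' | h'
      · exact absurd (mul_eq_zero.mp h') (by simp [hu, hne])
      · exact h'
    linarith
  have hε := key R₀ S₀ h0 h1 h2
  refine ⟨hε, fun R' S' hne ha hb => ?_⟩
  have hε' := key R' S' hne ha hb
  have : ((R' + S' : ℕ) : ℝ) = ((R₀ + S₀ : ℕ) : ℝ) := by push_cast; linarith
  exact_mod_cast this
end
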